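/- arXiv:2508.11563 — 5 statements merged into one kernel-verified Lean document; each statement's English description precedes it below -/
import Mathlib

section
/- Let v, v' be two points in [N]^k with v' ≠ v, and construct v'' equal to v' in all coordinates except one coordinate j, where v''_j = v'_j + 1 if v'_j < N and v''_j = v'_j - 1 if v'_j = N (choosing j so that this changes dist(v, v''), which is always possible when N > 2). Then either every query covering {v, v'} covers {v, v''}, or every query covering {v, v''} covers {v, v'}. -/
abbrev Pt (N k : ℕ) := Fin k → Fin N

def covers {N k : ℕ} (a b v : Pt N k) : Prop := ∀ i, a i ≤ v i ∧ v i ≤ b i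

def l1 {N k : ℕ} (v w : Pt N k) : ℕ := ∑ i, ((v i : ℤ) - (w i : ℤ)).natAbs

/-! Queries are boxes in the product order, hence order-convex: a query covering `v` and `v'`
covers the whole box `[[v, v']]`. Moving `v'` by one step in coordinate `j` either stays in
`[[v, v']]` or leaves it, and in the latter case `v'` lies in `[[v, v'']]`, because no value
lies strictly between `v'_j` and `v''_j`. -/

open Set
open scoped Interval

theorem mem_uIcc_or_mem_uIcc_of_covBy {α : Type*} [LinearOrder α] (x : α) {y z : α}
    (h : y ⋖ z ∨ z ⋖ y) : z ∈ [[x, y]] ∨ y ∈ [[x, z]] := by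
  wlog hyz : y ⋖ z generalizing y z
  · exact (this h.symm (h.resolve_left hyz)).symm
  rcases le_or_gt x y with hxy | hyx
  · exact Or.inr (mem_uIcc_of_le hxy hyz.le)
  · exact Or.inl (mem_uIcc_of_ge hyz.le (le_of_not_gt fun hxz => hyz.2 hyx hxz))

theorem Pi.mem_uIcc_of_eq_of_ne {ι : Type*} {α : ι → Type*} [∀ i, Lattice (α i)]
    {f g h : ∀ i, α i} (j : ι) (hne : ∀ i, i ≠ j → h i = g i) (hj : h j ∈ [[f j, g j]]) :
    h ∈ [[f, g]] := by
  rw [← pi_univ_uIcc]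
  intro i _
  by_cases hij : i = j
  · exact hij ▸ hj
  · exact hne i hij ▸ right_mem_uIcc

theorem covers_iff_mem_Icc {N k : ℕ} {a b v : Pt N k} : covers a b v ↔ v ∈ Icc a b := by
  simp only [covers, mem_Icc, Pi.le_def, forall_and]

theorem covers_of_mem_uIcc {N k : ℕ} {a b v v' w : Pt N k} (hw : w ∈ [[v, v']])
    (hv : covers a b v) (hv' : covers a b v') : covers a b w :=
  covers_iff_mem_Icc.2 <| uIcc_subset_Icc (covers_iff_mem_Icc.1 hv) (covers_iff_mem_Icc.1 hv') hw

theorem stmt6_general (N k : ℕ) (hN : 2 < N) (v v' v'' : Pt N k) (j : Fin k)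
    (hagree : ∀ i, i ≠ j → v'' i = v' i)
    (hcase : ((v' j : ℕ) + 1 < N ∧ (v'' j : ℕ) = (v' j : ℕ) + 1) ∨
             ((v' j : ℕ) + 1 = N ∧ (v'' j : ℕ) = (v' j : ℕ) - 1)) :
    (∀ a b : Pt N k, covers a b v → covers a b v' → covers a b v'') ∨
    (∀ a b : Pt N k, covers a b v → covers a b v'' → covers a b v') := by
  have hstep : v' j ⋖ v'' j ∨ v'' j ⋖ v' j := by
    simp only [Fin.covBy_iff, Nat.covBy_iff_add_one_eq]
    omega
  rcases mem_uIcc_or_mem_uIcc_of_covBy (v j) hstep with h | h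
  · exact Or.inl fun a b => covers_of_mem_uIcc (Pi.mem_uIcc_of_eq_of_ne j hagree h)
  · exact Or.inr fun a b =>
      covers_of_mem_uIcc (Pi.mem_uIcc_of_eq_of_ne j (fun i hi => (hagree i hi).symm) h)

/-- Let `v''` agree with `v'` on all coordinates except `j`, where `v''_j = v'_j + 1` if
`v'_j < N` and `v''_j = v'_j - 1` if `v'_j = N`, chosen so that `dist(v, v'') ≠ dist(v, v')`.
Then either every query covering `{v, v'}` covers `{v, v''}`, or every query covering
`{v, v''}` covers `{v, v'}`. -/
theorem stmt6 (N k : ℕ) (hN : 2 < N) (v v' v'' : Pt N k) (hvv' : v ≠ v') (j : Fin k)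
    (hagree : ∀ i, i ≠ j → v'' i = v' i)
    (hcase : ((v' j : ℕ) + 1 < N ∧ (v'' j : ℕ) = (v' j : ℕ) + 1) ∨
             ((v' j : ℕ) + 1 = N ∧ (v'' j : ℕ) = (v' j : ℕ) - 1))
    (hd : l1 v v'' ≠ l1 v v') :
    (∀ a b : Pt N k, covers a b v → covers a b v' → covers a b v'') ∨
    (∀ a b : Pt N k, covers a b v → covers a b v'' → covers a b v') :=
  stmt6_general N k hN v v' v'' j hagree hcase
end

section
/- Let QD be an assignment of positive weights to all range queries over [N]^k and consider the procedure that iterates d from k(N−1) down to 0 and, at each stage d, increases the weight of the minimum-bounding query of each pair of values at L1 distance d so that all distance-d pairs have equal total covering weight. At stage d, only weights of queries whose corner points are at L1 distance exactly d are modified, and hence only the covering probabilities of pairs of values at distance at most d change. Consequently, the output distribution satisfies: for all pairs (v,v') and (v'',v''') with dist(v,v') = dist(v'',v'''), Pr[query covers both v and v'] = Pr[query covers both v'' and v''']. -/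
open scoped Classical

/-- Total weight of valid queries covering both `v` and `v'`. -/
noncomputable def pairWt {N k : ℕ} (w : Pt N k × Pt N k → ℚ) (v v' : Pt N k) : ℚ :=
  ∑ q : Pt N k × Pt N k, if q.1 ≤ q.2 ∧ covers q.1 q.2 v ∧ covers q.1 q.2 v' then w q else 0

/-- Total weight of all valid queries. -/
noncomputable def totalWt {N k : ℕ} (w : Pt N k × Pt N k → ℚ) : ℚ :=
  ∑ q : Pt N k × Pt N k, if q.1 ≤ q.2 then w q else 0

/-- Minimum-bounding query of the pair `(v, v')`. -/
def mbq {N k : ℕ} (v v' : Pt N k) : Pt N k × Pt N k :=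
  (fun i => min (v i) (v' i), fun i => max (v i) (v' i))

/-- The pairs of values at `L^1` distance `d`. -/
noncomputable def dPairs (N k d : ℕ) : Finset (Pt N k × Pt N k) :=
  Finset.univ.filter (fun p : Pt N k × Pt N k => l1 p.1 p.2 = d)

/-- The largest covering weight among the distance-`d` pairs. -/
noncomputable def smaxd {N k : ℕ} (w : Pt N k × Pt N k → ℚ) (d : ℕ) : ℚ :=
  ((dPairs N k d).toList.map (fun p => pairWt w p.1 p.2)).foldr max 0

/-- One update step: raise the weight of the minimum-bounding query of the pair `p` so that
the covering weight of `p` becomes `s`. -/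
noncomputable def upd {N k : ℕ} (s : ℚ) (w : Pt N k × Pt N k → ℚ) (p : Pt N k × Pt N k) :
    Pt N k × Pt N k → ℚ :=
  Function.update w (mbq p.1 p.2) (w (mbq p.1 p.2) + (s - pairWt w p.1 p.2))

/-- Stage `d` of Algorithm 2: equalize the covering weights of all distance-`d` pairs. -/
noncomputable def stage {N k : ℕ} (d : ℕ) (w : Pt N k × Pt N k → ℚ) : Pt N k × Pt N k → ℚ :=
  (dPairs N k d).toList.foldl (upd (smaxd w d)) w

/-- Algorithm 2: iterate the stages for `d = k(N-1), ..., 1, 0`. -/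
noncomputable def flatten (N k : ℕ) (w : Pt N k × Pt N k → ℚ) : Pt N k × Pt N k → ℚ :=
  ((List.range (k * (N - 1) + 1)).reverse).foldl (fun w d => stage d w) w

namespace Stmt10Aux

variable {N k : ℕ}

lemma covers_pair_iff (a b v v' : Pt N k) :
    (covers a b v ∧ covers a b v') ↔ ∀ i, a i ≤ min (v i) (v' i) ∧ max (v i) (v' i) ≤ b i := by
  constructor
  · rintro ⟨h1, h2⟩ i
    exact ⟨le_min (h1 i).1 (h2 i).1, max_le (h1 i).2 (h2 i).2⟩
  · intro h
    exact ⟨fun i => ⟨le_trans (h i).1 (min_le_left _ _), le_trans (le_max_left _ _) (h i).2⟩,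
           fun i => ⟨le_trans (h i).1 (min_le_right _ _), le_trans (le_max_right _ _) (h i).2⟩⟩

lemma mbq_le (v v' : Pt N k) : (mbq v v').1 ≤ (mbq v v').2 :=
  fun i => le_trans (min_le_left _ _) (le_max_left _ _)

lemma mbq_covers (v v' : Pt N k) :
    covers (mbq v v').1 (mbq v v').2 v ∧ covers (mbq v v').1 (mbq v v').2 v' := by
  rw [covers_pair_iff]
  exact fun i => ⟨le_refl _, le_refl _⟩

lemma l1_mbq (v v' : Pt N k) : l1 (mbq v v').1 (mbq v v').2 = l1 v v' := by
  unfold l1 mbq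
  refine Finset.sum_congr rfl fun i _ => ?_
  show ((((min (v i) (v' i) : Fin N)):ℤ) - ((max (v i) (v' i) : Fin N):ℤ)).natAbs = _
  rcases le_total (v i) (v' i) with h | h
  · rw [min_eq_left h, max_eq_right h]
  · rw [min_eq_right h, max_eq_left h]; omega

lemma l1_le_of_covers {a b v v' : Pt N k} (hc : covers a b v) (hc' : covers a b v') :
    l1 v v' ≤ l1 a b := by
  refine Finset.sum_le_sum fun i _ => ?_
  have h1 := (hc i).1; have h2 := (hc i).2; have h3 := (hc' i).1; have h4 := (hc' i).2
  rw [Fin.le_def] at h1 h2 h3 h4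
  omega

lemma l1_lt_of_covers_ne {a b v v' : Pt N k} (hc : covers a b v) (hc' : covers a b v')
    (hne : (a, b) ≠ mbq v v') : l1 v v' < l1 a b := by
  have hex : ∃ i, a i ≠ min (v i) (v' i) ∨ b i ≠ max (v i) (v' i) := by
    by_contra hcon
    push_neg at hcon
    exact hne (Prod.ext (funext fun i => (hcon i).1) (funext fun i => (hcon i).2))
  obtain ⟨i0, hi0⟩ := hex
  refine Finset.sum_lt_sum (fun i _ => ?_) ⟨i0, Finset.mem_univ i0, ?_⟩
  · have h1 := (hc i).1; have h2 := (hc i).2; have h3 := (hc' i).1; have h4 := (hc' i).2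
    rw [Fin.le_def] at h1 h2 h3 h4
    omega
  · have h1 := (hc i0).1; have h2 := (hc i0).2; have h3 := (hc' i0).1; have h4 := (hc' i0).2
    rw [Fin.le_def] at h1 h2 h3 h4
    rcases le_total (v i0) (v' i0) with h | h
    · rw [min_eq_left h, max_eq_right h] at hi0
      rcases hi0 with hne' | hne' <;> rw [Fin.ne_iff_vne] at hne' <;> omega
    · rw [min_eq_right h, max_eq_left h] at hi0
      rcases hi0 with hne' | hne' <;> rw [Fin.ne_iff_vne] at hne' <;> omega

lemma pairWt_congr_mbq {v v' u u' : Pt N k} (h : mbq v v' = mbq u u')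
    (w : Pt N k × Pt N k → ℚ) : pairWt w v v' = pairWt w u u' := by
  have hmin : ∀ i, min (v i) (v' i) = min (u i) (u' i) := fun i =>
    congrFun (congrArg Prod.fst h) i
  have hmax : ∀ i, max (v i) (v' i) = max (u i) (u' i) := fun i =>
    congrFun (congrArg Prod.snd h) i
  unfold pairWt
  refine Finset.sum_congr rfl fun q _ => ?_
  have hiff : (covers q.1 q.2 v ∧ covers q.1 q.2 v') ↔ (covers q.1 q.2 u ∧ covers q.1 q.2 u') := by
    rw [covers_pair_iff, covers_pair_iff]
    constructor <;> intro hh i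
    · rw [← hmin i, ← hmax i]; exact hh i
    · rw [hmin i, hmax i]; exact hh i
  exact if_congr (and_congr_right fun _ => hiff) rfl rfl

lemma pairWt_update (w : Pt N k × Pt N k → ℚ) (q0 : Pt N k × Pt N k) (x : ℚ) (v v' : Pt N k) :
    pairWt (Function.update w q0 x) v v' =
      if q0.1 ≤ q0.2 ∧ covers q0.1 q0.2 v ∧ covers q0.1 q0.2 v' then
        pairWt w v v' + (x - w q0)
      else pairWt w v v' := by
  have key : ∀ q : Pt N k × Pt N k,
      (if q.1 ≤ q.2 ∧ covers q.1 q.2 v ∧ covers q.1 q.2 v' then Function.update w q0 x q else 0) =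
      (if q.1 ≤ q.2 ∧ covers q.1 q.2 v ∧ covers q.1 q.2 v' then w q else 0) +
      (if q = q0 then
        (if q0.1 ≤ q0.2 ∧ covers q0.1 q0.2 v ∧ covers q0.1 q0.2 v' then x - w q0 else 0) else 0) := by
    intro q
    by_cases hq : q = q0
    · subst hq
      simp only [Function.update_self, if_pos rfl]
      split_ifs <;> ring
    · simp [hq, Function.update_of_ne hq]
  unfold pairWt
  rw [Finset.sum_congr rfl fun q _ => key q, Finset.sum_add_distrib,
    Finset.sum_ite_eq' Finset.univ q0 (fun _ =>
      if q0.1 ≤ q0.2 ∧ covers q0.1 q0.2 v ∧ covers q0.1 q0.2 v' then x - w q0 else 0)]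
  simp only [Finset.mem_univ, if_pos]
  split_ifs <;> ring

lemma upd_pairWt_d {s : ℚ} {d : ℕ} (w : Pt N k × Pt N k → ℚ) (p : Pt N k × Pt N k)
    (v v' : Pt N k) (hp : l1 p.1 p.2 = d) (hv : l1 v v' = d) :
    pairWt (upd s w p) v v' = if mbq p.1 p.2 = mbq v v' then s else pairWt w v v' := by
  unfold upd
  rw [pairWt_update]
  split_ifs with h1 h2 h2
  · rw [pairWt_congr_mbq h2 w]; ring
  · exfalso
    have hlt : l1 v v' < l1 (mbq p.1 p.2).1 (mbq p.1 p.2).2 :=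
      l1_lt_of_covers_ne h1.2.1 h1.2.2 (by rwa [Prod.mk.eta])
    rw [l1_mbq, hp, hv] at hlt
    exact lt_irrefl d hlt
  · exact absurd (h2 ▸ ⟨mbq_le v v', mbq_covers v v'⟩) h1
  · rfl

lemma foldl_keep {s : ℚ} {d : ℕ} :
    ∀ (L : List (Pt N k × Pt N k)) (w₀ : Pt N k × Pt N k → ℚ),
      (∀ p ∈ L, l1 p.1 p.2 = d) → ∀ v v' : Pt N k, l1 v v' = d → pairWt w₀ v v' = s →
      pairWt (L.foldl (upd s) w₀) v v' = s := by
  intro L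
  induction L with
  | nil => intro w₀ _ v v' _ h; exact h
  | cons p0 L ih =>
    intro w₀ hL v v' hv h
    simp only [List.foldl_cons]
    refine ih _ (fun p hp => hL p (List.mem_cons_of_mem _ hp)) v v' hv ?_
    rw [upd_pairWt_d w₀ p0 v v' (hL p0 (List.mem_cons_self)) hv]
    split_ifs <;> [rfl; exact h]

lemma foldl_sets {s : ℚ} {d : ℕ} :
    ∀ (L : List (Pt N k × Pt N k)) (w₀ : Pt N k × Pt N k → ℚ),
      (∀ p ∈ L, l1 p.1 p.2 = d) → ∀ p ∈ L, pairWt (L.foldl (upd s) w₀) p.1 p.2 = s := by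
  intro L
  induction L with
  | nil => intro _ _ p hp; exact absurd hp List.not_mem_nil
  | cons p0 L ih =>
    intro w₀ hL p hp
    simp only [List.foldl_cons]
    rcases List.mem_cons.mp hp with rfl | hp'
    · refine foldl_keep L _ (fun q hq => hL q (List.mem_cons_of_mem _ hq)) p.1 p.2
        (hL p (List.mem_cons_self)) ?_
      rw [upd_pairWt_d w₀ p p.1 p.2 (hL p (List.mem_cons_self))
        (hL p (List.mem_cons_self)), if_pos rfl]
    · exact ih _ (fun q hq => hL q (List.mem_cons_of_mem _ hq)) p hp'

lemma foldl_upd_apply {s : ℚ} {d : ℕ} :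
    ∀ (L : List (Pt N k × Pt N k)) (w₀ : Pt N k × Pt N k → ℚ) (q : Pt N k × Pt N k),
      (∀ p ∈ L, l1 p.1 p.2 = d) → l1 q.1 q.2 ≠ d → (L.foldl (upd s) w₀) q = w₀ q := by
  intro L
  induction L with
  | nil => intro _ _ _ _; rfl
  | cons p0 L ih =>
    intro w₀ q hL hq
    simp only [List.foldl_cons]
    rw [ih _ q (fun p hp => hL p (List.mem_cons_of_mem _ hp)) hq]
    unfold upd
    refine Function.update_of_ne ?_ _ _
    intro hcon
    apply hq
    rw [hcon, l1_mbq]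
    exact hL p0 (List.mem_cons_self)

lemma l1_le_bound (v v' : Pt N k) : l1 v v' ≤ k * (N - 1) := by
  calc l1 v v' ≤ ∑ _i : Fin k, (N - 1) := by
        refine Finset.sum_le_sum fun i _ => ?_
        have := (v i).isLt; have := (v' i).isLt
        omega
    _ = k * (N - 1) := by simp [Finset.sum_const, mul_comm]

end Stmt10Aux

/-- Correctness of the equidistant flattening procedure (Algorithm 2): stage `d` modifies only
weights of queries whose corners are at distance exactly `d`, hence only covering
probabilities of pairs at distance at most `d` change, and in the output distribution all
equidistant pairs of values are covered with the same probability. -/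
theorem stmt10 (N k : ℕ) (w : Pt N k × Pt N k → ℚ)
    (hpos : ∀ q : Pt N k × Pt N k, q.1 ≤ q.2 → 0 < w q)
    (hzero : ∀ q : Pt N k × Pt N k, ¬ q.1 ≤ q.2 → w q = 0) :
    (∀ (d : ℕ) (w₀ : Pt N k × Pt N k → ℚ) (q : Pt N k × Pt N k),
        l1 q.1 q.2 ≠ d → stage d w₀ q = w₀ q) ∧
    (∀ (d : ℕ) (w₀ : Pt N k × Pt N k → ℚ) (v v' : Pt N k),
        d < l1 v v' → pairWt (stage d w₀) v v' = pairWt w₀ v v') ∧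
    (∀ v v' v'' v''' : Pt N k, l1 v v' = l1 v'' v''' →
        pairWt (flatten N k w) v v' / totalWt (flatten N k w) =
        pairWt (flatten N k w) v'' v''' / totalWt (flatten N k w)) := by
  classical
  have part1 : ∀ (d : ℕ) (w₀ : Pt N k × Pt N k → ℚ) (q : Pt N k × Pt N k),
      l1 q.1 q.2 ≠ d → stage d w₀ q = w₀ q := by
    intro d w₀ q hq
    unfold stage
    refine Stmt10Aux.foldl_upd_apply _ w₀ q (fun p hp => ?_) hq
    have hmem := Finset.mem_toList.mp hp
    simpa [dPairs] using hmem
  have part2 : ∀ (d : ℕ) (w₀ : Pt N k × Pt N k → ℚ) (v v' : Pt N k),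
      d < l1 v v' → pairWt (stage d w₀) v v' = pairWt w₀ v v' := by
    intro d w₀ v v' hd
    unfold pairWt
    refine Finset.sum_congr rfl fun q _ => ?_
    by_cases hc : q.1 ≤ q.2 ∧ covers q.1 q.2 v ∧ covers q.1 q.2 v'
    · rw [if_pos hc, if_pos hc, part1 d w₀ q ?_]
      have hle := Stmt10Aux.l1_le_of_covers hc.2.1 hc.2.2
      omega
    · rw [if_neg hc, if_neg hc]
  have stage_eq : ∀ (d : ℕ) (w₀ : Pt N k × Pt N k → ℚ) (v v' : Pt N k),
      l1 v v' = d → pairWt (stage d w₀) v v' = smaxd w₀ d := by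
    intro d w₀ v v' hv
    unfold stage
    have hmem : (v, v') ∈ (dPairs N k d).toList := by
      rw [Finset.mem_toList]
      simp [dPairs, hv]
    exact Stmt10Aux.foldl_sets (dPairs N k d).toList w₀ (fun p hp => by
      have hmem' := Finset.mem_toList.mp hp
      simpa [dPairs] using hmem') (v, v') hmem
  refine ⟨part1, part2, ?_⟩
  intro v v' v'' v''' h
  suffices hp : pairWt (flatten N k w) v v' = pairWt (flatten N k w) v'' v''' by rw [hp]
  have preserve : ∀ (L : List ℕ) (w₀ : Pt N k × Pt N k → ℚ) (u u' : Pt N k),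
      (∀ d ∈ L, d < l1 u u') →
      pairWt (L.foldl (fun w d => stage d w) w₀) u u' = pairWt w₀ u u' := by
    intro L
    induction L with
    | nil => intro w₀ u u' _; rfl
    | cons d0 L ih =>
      intro w₀ u u' hL
      simp only [List.foldl_cons]
      rw [ih _ u u' (fun d hd => hL d (List.mem_cons_of_mem _ hd)),
        part2 d0 w₀ u u' (hL d0 (List.mem_cons_self))]
  set M := k * (N - 1) with hM
  set e := l1 v v' with he
  have heM : e ≤ M := Stmt10Aux.l1_le_bound v v'
  have hsplit : List.range (M + 1) =
      List.range (e + 1) ++ (List.range (M - e)).map (fun j => (e + 1) + j) := by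
    have h1 : M + 1 = (e + 1) + (M - e) := by omega
    rw [h1, List.range_add]
  set w₁ := (((List.range (M - e)).map (fun j => (e + 1) + j)).reverse).foldl
      (fun w d => stage d w) w with hw₁
  have hflatten : flatten N k w =
      ((List.range e).reverse).foldl (fun w d => stage d w) (stage e w₁) := by
    unfold flatten
    rw [hsplit, List.reverse_append, List.foldl_append, List.range_succ,
      List.reverse_append, List.foldl_append]
    rfl
  rw [hflatten,
    preserve _ _ v v' (fun d hd => by
      rw [List.mem_reverse, List.mem_range] at hd; omega),
    preserve _ _ v'' v''' (fun d hd => by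
      rw [List.mem_reverse, List.mem_range] at hd; omega),
    stage_eq e w₁ v v' he.symm, stage_eq e w₁ v'' v''' (by rw [← h, he])]
end

section
/- Let DB and DB' be databases mapping a finite set of record identifiers I to values in [N]^k, let QD be a probability distribution over all range queries, and define the response distribution RD (resp. RD') assigning to each subset rsp ⊆ I the probability that a query drawn from QD returns exactly the records of DB (resp. DB') whose values it covers. Suppose that for every subset S ⊆ I with |S| ≤ 2k, the probability that a random query covers all values DB(id), id ∈ S, equals the probability that it covers all values DB'(id), id ∈ S. Then RD = RD', i.e., every response rsp ⊆ I has the same probability under both databases. -/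
/-!
Both response probabilities are alternating sums of coverage probabilities, by
inclusion–exclusion over the records outside the response. So it suffices that coverage
probabilities agree on all sets of records, not only on those of size at most `2k`. This holds
because a box covers a set of points as soon as it covers, in each of the `k` coordinates, a
point of minimal and one of maximal value; covering probabilities are antitone in the set, so
each side is squeezed between values on such extremal subsets, where the hypothesis applies.
-/

open scoped Classical

/-- The response of the query `q` on database `DB`: the identifiers whose values it covers. -/
noncomputable def response {N k : ℕ} {I : Type*} [Fintype I]
    (DB : I → Pt N k) (q : Pt N k × Pt N k) : Finset I :=
  Finset.univ.filter (fun id => covers q.1 q.2 (DB id))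

/-- Probability (under `QD`) that the response on `DB` is exactly `rsp`. -/
noncomputable def respPr {N k : ℕ} {I : Type*} [Fintype I]
    (QD : Pt N k × Pt N k → ℝ) (DB : I → Pt N k) (rsp : Finset I) : ℝ :=
  ∑ q : Pt N k × Pt N k, if q.1 ≤ q.2 ∧ response DB q = rsp then QD q else 0

/-- Probability (under `QD`) that a query covers all values of the records in `S`. -/
noncomputable def covAllPr {N k : ℕ} {I : Type*} [Fintype I]
    (QD : Pt N k × Pt N k → ℝ) (DB : I → Pt N k) (S : Finset I) : ℝ :=
  ∑ q : Pt N k × Pt N k, if q.1 ≤ q.2 ∧ ∀ id ∈ S, covers q.1 q.2 (DB id) then QD q else 0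

lemma Finset.sum_powerset_neg_one_pow_card_ite_subset {α R : Type*} [DecidableEq α] [CommRing R]
    (A B : Finset α) :
    ∑ T ∈ A.powerset, (if T ⊆ B then (-1 : R) ^ T.card else 0) =
      if Disjoint A B then 1 else 0 := by
  have hfilter : A.powerset.filter (· ⊆ B) = (A ∩ B).powerset := by
    ext T; simp only [Finset.mem_filter, Finset.mem_powerset, Finset.subset_inter_iff]
  rw [← Finset.sum_filter, hfilter]
  simp only [Finset.disjoint_iff_inter_eq_empty]
  have h := congrArg (Int.cast : ℤ → R) (Finset.sum_powerset_neg_one_pow_card (x := A ∩ B))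
  push_cast [apply_ite (Int.cast : ℤ → R)] at h
  exact h

lemma Finset.ite_eq_eq_sum_powerset_compl {α R : Type*} [Fintype α] [DecidableEq α] [CommRing R]
    (A B : Finset α) :
    (if B = A then (1 : R) else 0) =
      ∑ T ∈ Aᶜ.powerset, (if A ∪ T ⊆ B then (-1 : R) ^ T.card else 0) := by
  simp only [Finset.union_subset_iff]
  by_cases hAB : A ⊆ B
  · simp only [hAB, true_and, Finset.sum_powerset_neg_one_pow_card_ite_subset,
      disjoint_compl_left_iff]
    exact if_congr ⟨fun h => h.le, fun h => Finset.Subset.antisymm h hAB⟩ rfl rfl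
  · simp only [hAB, false_and, if_false, Finset.sum_const_zero]
    exact if_neg fun h => hAB h.ge

lemma exists_extremal_subset {N k : ℕ} {I : Type*} (DB : I → Pt N k) (S : Finset I) :
    ∃ E ⊆ S, E.card ≤ 2 * k ∧
      ∀ a b : Pt N k, (∀ id ∈ E, covers a b (DB id)) → ∀ id ∈ S, covers a b (DB id) := by
  rcases S.eq_empty_or_nonempty with rfl | hS
  · exact ⟨∅, le_rfl, by simp, by simp⟩
  choose lo hloS hlo using fun i : Fin k => S.exists_min_image (fun id => DB id i) hS
  choose hi hhiS hhi using fun i : Fin k => S.exists_max_image (fun id => DB id i) hS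
  refine ⟨Finset.univ.image lo ∪ Finset.univ.image hi, ?_, ?_, ?_⟩
  · simp only [Finset.union_subset_iff, Finset.image_subset_iff]
    exact ⟨fun i _ => hloS i, fun i _ => hhiS i⟩
  · calc (Finset.univ.image lo ∪ Finset.univ.image hi).card
        ≤ (Finset.univ.image lo).card + (Finset.univ.image hi).card := Finset.card_union_le _ _
      _ ≤ Fintype.card (Fin k) + Fintype.card (Fin k) :=
          add_le_add Finset.card_image_le Finset.card_image_le
      _ = 2 * k := by simp [two_mul]
  · intro a b hE id hid i
    have hlo_cov := hE (lo i) (by simp)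
    have hhi_cov := hE (hi i) (by simp)
    exact ⟨(hlo_cov i).1.trans (hlo i id hid), (hhi i id hid).trans (hhi_cov i).2⟩

section

variable {N k : ℕ} {I : Type*} [Fintype I]

lemma subset_response_iff (DB : I → Pt N k) (q : Pt N k × Pt N k) (S : Finset I) :
    S ⊆ response DB q ↔ ∀ id ∈ S, covers q.1 q.2 (DB id) := by
  simp [Finset.subset_iff, response]

lemma respPr_eq_sum_powerset_covAllPr [DecidableEq I] (QD : Pt N k × Pt N k → ℝ)
    (DB : I → Pt N k) (rsp : Finset I) :
    respPr QD DB rsp =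
      ∑ T ∈ rspᶜ.powerset, (-1 : ℝ) ^ T.card * covAllPr QD DB (rsp ∪ T) := by
  simp only [respPr, covAllPr, Finset.mul_sum, ← subset_response_iff]
  rw [Finset.sum_comm]
  refine Finset.sum_congr rfl fun q _ => ?_
  by_cases hq : q.1 ≤ q.2
  · simp only [hq, true_and, mul_ite, mul_zero]
    rw [← mul_one (QD q), ← mul_zero (QD q), ← mul_ite, Finset.ite_eq_eq_sum_powerset_compl,
      Finset.mul_sum]
    refine Finset.sum_congr rfl fun T _ => ?_
    split_ifs <;> ring
  · simp [hq]

lemma covAllPr_anti {QD : Pt N k × Pt N k → ℝ} (hnn : ∀ q, 0 ≤ QD q) (DB : I → Pt N k)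
    {E S : Finset I} (hES : E ⊆ S) : covAllPr QD DB S ≤ covAllPr QD DB E := by
  refine Finset.sum_le_sum fun q _ => ?_
  split_ifs with hS hE hE
  · exact le_rfl
  · exact absurd ⟨hS.1, fun id hid => hS.2 id (hES hid)⟩ hE
  · exact hnn q
  · exact le_rfl

lemma covAllPr_eq_of_forall_covers (QD : Pt N k × Pt N k → ℝ) (DB : I → Pt N k)
    {E S : Finset I} (hES : E ⊆ S)
    (hE : ∀ a b : Pt N k, (∀ id ∈ E, covers a b (DB id)) → ∀ id ∈ S, covers a b (DB id)) :
    covAllPr QD DB S = covAllPr QD DB E := by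
  refine Finset.sum_congr rfl fun q _ => if_congr ?_ rfl rfl
  exact and_congr_right fun _ => ⟨fun h id hid => h id (hES hid), hE q.1 q.2⟩

lemma covAllPr_eq_of_forall_card_le {QD : Pt N k × Pt N k → ℝ} (hnn : ∀ q, 0 ≤ QD q)
    {DB DB' : I → Pt N k}
    (hpass : ∀ S : Finset I, S.card ≤ 2 * k → covAllPr QD DB S = covAllPr QD DB' S)
    (S : Finset I) : covAllPr QD DB S = covAllPr QD DB' S := by
  obtain ⟨E, hES, hEcard, hE⟩ := exists_extremal_subset DB S
  obtain ⟨E', hE'S, hE'card, hE'⟩ := exists_extremal_subset DB' S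
  apply le_antisymm
  · calc covAllPr QD DB S ≤ covAllPr QD DB E' := covAllPr_anti hnn DB hE'S
      _ = covAllPr QD DB' E' := hpass E' hE'card
      _ = covAllPr QD DB' S := (covAllPr_eq_of_forall_covers QD DB' hE'S hE').symm
  · calc covAllPr QD DB' S ≤ covAllPr QD DB' E := covAllPr_anti hnn DB' hES
      _ = covAllPr QD DB E := (hpass E hEcard).symm
      _ = covAllPr QD DB S := (covAllPr_eq_of_forall_covers QD DB hES hE).symm

end

theorem stmt11_general (N k : ℕ) (I : Type*) [Fintype I]
    (DB DB' : I → Pt N k)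
    (QD : Pt N k × Pt N k → ℝ)
    (hnn : ∀ q : Pt N k × Pt N k, 0 ≤ QD q)
    (hpass : ∀ S : Finset I, S.card ≤ 2 * k → covAllPr QD DB S = covAllPr QD DB' S) :
    ∀ rsp : Finset I, respPr QD DB rsp = respPr QD DB' rsp := by
  intro rsp
  simp only [respPr_eq_sum_powerset_covAllPr, covAllPr_eq_of_forall_card_le hnn hpass]

/-- Theorem 2: if `DB'` is `T∩`-passing, i.e. for every subset `S` of at most `2k` records the
probability of simultaneously covering the values of `S` agrees in `DB` and `DB'`, then the
two response distributions coincide. -/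
theorem stmt11 (N k : ℕ) (I : Type*) [Fintype I] [DecidableEq I]
    (DB DB' : I → Pt N k) (hDB : Function.Injective DB) (hDB' : Function.Injective DB')
    (QD : Pt N k × Pt N k → ℝ)
    (hnn : ∀ q : Pt N k × Pt N k, 0 ≤ QD q)
    (hzero : ∀ q : Pt N k × Pt N k, ¬ q.1 ≤ q.2 → QD q = 0)
    (hsum : ∑ q : Pt N k × Pt N k, QD q = 1)
    (hpass : ∀ S : Finset I, S.card ≤ 2 * k → covAllPr QD DB S = covAllPr QD DB' S) :
    ∀ rsp : Finset I, respPr QD DB rsp = respPr QD DB' rsp :=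
  stmt11_general N k I DB DB' QD hnn hpass
end

section
/- Let DB be a database over I with values in [N]^k, rsp a response (set of identifiers), and rsp* ⊆ rsp the subset of identifiers whose values are coordinatewise minimal or maximal among the values of rsp (as in the 2k-covering lemma). Then every response rsp'' of DB that contains rsp* must contain all of rsp; in particular, |rsp''| ≥ |rsp|, and if |rsp''| = |rsp| then rsp'' = rsp. -/
open scoped Classical

/-- The records of `rsp` whose values are coordinatewise minimal or maximal among the
values of the records in `rsp`. -/
noncomputable def extremes {N k : ℕ} {I : Type*} [Fintype I]
    (DB : I → Pt N k) (rsp : Finset I) : Finset I :=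
  rsp.filter (fun id => ∃ i : Fin k,
    (∀ id' ∈ rsp, DB id i ≤ DB id' i) ∨ (∀ id' ∈ rsp, DB id' i ≤ DB id i))

section Extremes

variable {N k : ℕ} {I : Type*} [Fintype I] (DB : I → Pt N k)

theorem mem_response {q : Pt N k × Pt N k} {id : I} :
    id ∈ response DB q ↔ covers q.1 q.2 (DB id) := by
  simp [response]

theorem exists_mem_extremes_le {rsp : Finset I} {id : I} (hid : id ∈ rsp) (i : Fin k) :
    ∃ a ∈ extremes DB rsp, DB a i ≤ DB id i := by
  obtain ⟨a, ha, hmin⟩ := rsp.exists_min_image (fun id' => DB id' i) ⟨id, hid⟩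
  exact ⟨a, Finset.mem_filter.2 ⟨ha, i, Or.inl hmin⟩, hmin id hid⟩

theorem exists_mem_extremes_ge {rsp : Finset I} {id : I} (hid : id ∈ rsp) (i : Fin k) :
    ∃ b ∈ extremes DB rsp, DB id i ≤ DB b i := by
  obtain ⟨b, hb, hmax⟩ := rsp.exists_max_image (fun id' => DB id' i) ⟨id, hid⟩
  exact ⟨b, Finset.mem_filter.2 ⟨hb, i, Or.inr hmax⟩, hmax id hid⟩

theorem subset_response_of_extremes_subset {rsp : Finset I} {q : Pt N k × Pt N k}
    (hsub : extremes DB rsp ⊆ response DB q) : rsp ⊆ response DB q := by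
  intro id hid
  rw [mem_response]
  intro i
  obtain ⟨a, ha, hai⟩ := exists_mem_extremes_le DB hid i
  obtain ⟨b, hb, hbi⟩ := exists_mem_extremes_ge DB hid i
  exact ⟨((mem_response DB).1 (hsub ha) i).1.trans hai,
    hbi.trans ((mem_response DB).1 (hsub hb) i).2⟩

end Extremes

theorem stmt14_general (N k : ℕ) (I : Type*) [Fintype I]
    (DB : I → Pt N k)
    (rsp : Finset I)
    (q : Pt N k × Pt N k) (rsp'' : Finset I)
    (hrsp'' : rsp'' = response DB q)
    (hsub : extremes DB rsp ⊆ rsp'') :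
    rsp ⊆ rsp'' ∧ rsp.card ≤ rsp''.card ∧ (rsp''.card = rsp.card → rsp'' = rsp) := by
  subst hrsp''
  have hcover := subset_response_of_extremes_subset DB hsub
  exact ⟨hcover, Finset.card_le_card hcover,
    fun hcard => (Finset.eq_of_subset_of_card_le hcover hcard.le).symm⟩

/-- Let `rsp` be a response of `DB` and `rsp*` its subset of coordinatewise extremal records.
Every response `rsp''` of `DB` containing `rsp*` contains all of `rsp`; hence
`|rsp''| ≥ |rsp|`, and if `|rsp''| = |rsp|` then `rsp'' = rsp`. -/
theorem stmt14 (N k : ℕ) (I : Type*) [Fintype I] [DecidableEq I]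
    (DB : I → Pt N k)
    (q0 : Pt N k × Pt N k) (hq0 : q0.1 ≤ q0.2) (rsp : Finset I)
    (hrsp : rsp = response DB q0)
    (q : Pt N k × Pt N k) (hq : q.1 ≤ q.2) (rsp'' : Finset I)
    (hrsp'' : rsp'' = response DB q)
    (hsub : extremes DB rsp ⊆ rsp'') :
    rsp ⊆ rsp'' ∧ rsp.card ≤ rsp''.card ∧ (rsp''.card = rsp.card → rsp'' = rsp) :=
  stmt14_general N k I DB rsp q rsp'' hrsp'' hsub
end

section
/- In the tightness construction (S and S' as above, starting from a uniform weighting of all queries and, for each nonempty subset of S, decreasing the weight of its minimum-bounding query by δ if the subset has odd size and increasing it by δ if even size), for every strict nonempty subset S* ⊊ S the total weight of queries covering all points of S* changes by δ·∑_{i=0}^{|S|−|S*|} C(|S|−|S*|,i)(−1)^i = 0, while the total weight of queries covering all of S changes only by the single term corresponding to the MBQ of S itself, namely by −δ if |S| is odd and by +δ if |S| is even. -/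
open scoped Classical

/-- Total weight of valid queries covering all points of `T`. -/
noncomputable def covAllWt {N k : ℕ} (w : Pt N k × Pt N k → ℚ) (T : Finset (Pt N k)) : ℚ :=
  ∑ q : Pt N k × Pt N k, if q.1 ≤ q.2 ∧ ∀ v ∈ T, covers q.1 q.2 v then w q else 0

lemma sum_sign_powerset {α : Type*} [DecidableEq α] (A : Finset α) (δ : ℚ) (m : ℕ) :
    (∑ U ∈ A.powerset, (if Even (m + U.card) then δ else -δ)) =
      if A = ∅ then (if Even m then δ else -δ) else 0 := by
  have hsign : ∀ n : ℕ, (if Even n then δ else -δ) = (-1 : ℚ) ^ n * δ := by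
    intro n
    rcases Nat.even_or_odd n with h | h
    · simp [h, h.neg_one_pow]
    · simp [Nat.not_even_iff_odd.mpr h, h.neg_one_pow]
  have hz : (∑ U ∈ A.powerset, ((-1 : ℚ) ^ U.card)) = if A = ∅ then 1 else 0 := by
    have h := Finset.sum_powerset_neg_one_pow_card (x := A)
    calc (∑ U ∈ A.powerset, ((-1 : ℚ) ^ U.card))
        = ((∑ U ∈ A.powerset, (-1 : ℤ) ^ U.card : ℤ) : ℚ) := by push_cast; rfl
      _ = _ := by rw [h]; split_ifs <;> simp
  calc (∑ U ∈ A.powerset, (if Even (m + U.card) then δ else -δ))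
      = ∑ U ∈ A.powerset, (-1 : ℚ) ^ m * ((-1 : ℚ) ^ U.card * δ) := by
        refine Finset.sum_congr rfl fun U _ => ?_
        rw [hsign, pow_add]; ring
    _ = (-1 : ℚ) ^ m * ((∑ U ∈ A.powerset, (-1 : ℚ) ^ U.card) * δ) := by
        rw [← Finset.mul_sum, ← Finset.sum_mul]
    _ = _ := by
        rw [hz]
        split_ifs with h h2
        · rw [h2.neg_one_pow]; ring
        · rw [(Nat.not_even_iff_odd.mp h2).neg_one_pow]; ring
        · ring

/-- In the tightness construction, modifying the weight of the minimum-bounding query of each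
nonempty subset of `S` by `+δ` (even size) or `-δ` (odd size) leaves the total weight of
queries covering any strict nonempty subset `S* ⊊ S` unchanged (the alternating binomial sum
cancels), while the total weight of queries covering all of `S` changes by exactly `±δ`,
i.e. by `+δ` when `|S| = 2k` is even. -/
theorem stmt16 (N k : ℕ) (S : Finset (Pt N k)) (hS : S.Nonempty) (δ : ℚ)
    (mbq : Finset (Pt N k) → Pt N k × Pt N k)
    (hinj : ∀ T T' : Finset (Pt N k), T ⊆ S → T' ⊆ S → mbq T = mbq T' → T = T')
    (hvalid : ∀ T : Finset (Pt N k), T ⊆ S → (mbq T).1 ≤ (mbq T).2)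
    (hcov : ∀ T : Finset (Pt N k), T ⊆ S → ∀ v ∈ S, (covers (mbq T).1 (mbq T).2 v ↔ v ∈ T))
    (w w' : Pt N k × Pt N k → ℚ)
    (hw' : ∀ q : Pt N k × Pt N k,
      w' q = w q + ∑ T ∈ S.powerset.filter (fun T => T.Nonempty ∧ mbq T = q),
        (if Even T.card then δ else -δ)) :
    (∀ Sstar : Finset (Pt N k), Sstar ⊂ S → Sstar.Nonempty →
        covAllWt w' Sstar = covAllWt w Sstar) ∧
    covAllWt w' S = covAllWt w S + (if Even S.card then δ else -δ) := by
  -- main computation for any nonempty Sstar ⊆ S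
  have main : ∀ Sstar : Finset (Pt N k), Sstar ⊆ S → Sstar.Nonempty →
      covAllWt w' Sstar = covAllWt w Sstar +
        (if S \ Sstar = ∅ then (if Even Sstar.card then δ else -δ) else 0) := by
    intro Sstar hsub hne
    have split : covAllWt w' Sstar = covAllWt w Sstar +
        ∑ q : Pt N k × Pt N k, (if q.1 ≤ q.2 ∧ ∀ v ∈ Sstar, covers q.1 q.2 v then
          (∑ T ∈ S.powerset.filter (fun T => T.Nonempty ∧ mbq T = q),
            (if Even T.card then δ else -δ)) else 0) := by
      unfold covAllWt
      rw [← Finset.sum_add_distrib]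
      refine Finset.sum_congr rfl fun q _ => ?_
      rw [hw' q]
      split_ifs <;> ring
    rw [split]
    congr 1
    -- push the if inside and reindex by fibers of mbq
    have step1 : ∀ q : Pt N k × Pt N k,
        (if q.1 ≤ q.2 ∧ ∀ v ∈ Sstar, covers q.1 q.2 v then
          (∑ T ∈ S.powerset.filter (fun T => T.Nonempty ∧ mbq T = q),
            (if Even T.card then δ else -δ)) else 0)
        = ∑ T ∈ (S.powerset.filter (fun T => T.Nonempty)).filter (fun T => mbq T = q),
            (if (mbq T).1 ≤ (mbq T).2 ∧ ∀ v ∈ Sstar, covers (mbq T).1 (mbq T).2 v then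
              (if Even T.card then δ else -δ) else 0) := by
      intro q
      rw [Finset.filter_filter]
      split_ifs with h
      · refine Finset.sum_congr rfl fun T hT => ?_
        obtain ⟨-, -, hq⟩ := Finset.mem_filter.mp hT
        simp only [hq]
        rw [if_pos h]
      · refine (Finset.sum_eq_zero fun T hT => ?_).symm
        obtain ⟨-, -, hq⟩ := Finset.mem_filter.mp hT
        simp only [hq]
        rw [if_neg h]
    simp_rw [step1]
    rw [Finset.sum_fiberwise]
    -- now a sum over nonempty subsets T of S; condition becomes Sstar ⊆ T
    have step2 : ∀ T ∈ S.powerset.filter (fun T => T.Nonempty),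
        (if (mbq T).1 ≤ (mbq T).2 ∧ ∀ v ∈ Sstar, covers (mbq T).1 (mbq T).2 v then
          (if Even T.card then δ else -δ) else 0)
        = (if Sstar ⊆ T then (if Even T.card then δ else -δ) else 0) := by
      intro T hT
      obtain ⟨hTS, -⟩ := Finset.mem_filter.mp hT
      rw [Finset.mem_powerset] at hTS
      congr 1
      simp only [eq_iff_iff]
      constructor
      · rintro ⟨-, h2⟩ v hv
        exact (hcov T hTS v (hsub hv)).mp (h2 v hv)
      · intro h
        exact ⟨hvalid T hTS, fun v hv => (hcov T hTS v (hsub hv)).mpr (h hv)⟩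
    rw [Finset.sum_congr rfl step2, ← Finset.sum_filter, Finset.filter_filter]
    -- T nonempty ∧ Sstar ⊆ T  ↔  Sstar ⊆ T (Sstar nonempty)
    have step3 : (S.powerset.filter (fun T => T.Nonempty ∧ Sstar ⊆ T))
        = S.powerset.filter (fun T => Sstar ⊆ T) := by
      apply Finset.filter_congr
      intro T _
      simp only [and_iff_right_iff_imp]
      exact fun h => hne.mono h
    rw [step3]
    -- reindex: T = Sstar ∪ U with U ⊆ S \ Sstar
    rw [show (S.powerset.filter (fun T => Sstar ⊆ T)) =
        (S \ Sstar).powerset.image (fun U => Sstar ∪ U) from ?_, Finset.sum_image ?_]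
    · have : ∀ U ∈ (S \ Sstar).powerset,
          (if Even (Sstar ∪ U).card then δ else -δ)
          = (if Even (Sstar.card + U.card) then δ else -δ) := by
        intro U hU
        rw [Finset.mem_powerset] at hU
        have hdisj : Disjoint Sstar U :=
          Finset.disjoint_left.mpr fun a ha haU => (Finset.mem_sdiff.mp (hU haU)).2 ha
        rw [Finset.card_union_of_disjoint hdisj]
      rw [Finset.sum_congr rfl this, sum_sign_powerset]
    · intro U hU U' hU' h
      rw [Finset.mem_coe, Finset.mem_powerset] at hU hU'
      beta_reduce at h
      ext a
      constructor
      · intro ha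
        have : a ∈ Sstar ∪ U' := h ▸ Finset.mem_union_right _ ha
        rcases Finset.mem_union.mp this with h1 | h1
        · exact absurd h1 (Finset.mem_sdiff.mp (hU ha)).2
        · exact h1
      · intro ha
        have : a ∈ Sstar ∪ U := h ▸ Finset.mem_union_right _ ha
        rcases Finset.mem_union.mp this with h1 | h1
        · exact absurd h1 (Finset.mem_sdiff.mp (hU' ha)).2
        · exact h1
    · ext T
      simp only [Finset.mem_filter, Finset.mem_powerset, Finset.mem_image]
      constructor
      · rintro ⟨hTS, hST⟩
        exact ⟨T \ Sstar, Finset.sdiff_subset_sdiff hTS le_rfl,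
          by rw [Finset.union_sdiff_of_subset hST]⟩
      · rintro ⟨U, hU, rfl⟩
        exact ⟨Finset.union_subset hsub (hU.trans Finset.sdiff_subset), Finset.subset_union_left⟩
  constructor
  · intro Sstar hss hne
    rw [main Sstar hss.subset hne]
    have hd : (S \ Sstar).Nonempty :=
      Finset.sdiff_nonempty.mpr fun h => hss.ne (Finset.Subset.antisymm hss.subset h)
    rw [if_neg (Finset.nonempty_iff_ne_empty.mp hd), add_zero]
  · rw [main S le_rfl hS, Finset.sdiff_self, if_pos rfl]
end
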